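/- With f and t* as above (f(t) = sup over θ ∈ C, ‖θ-θ*‖ ≤ t of ⟨v - θ*, θ - θ*⟩, and t* the maximizer of f(t) - t²/2), if s > 0 satisfies f(s) - s²/2 ≤ 0, then t* ≤ s. Consequently ‖Proj_C(v) - θ*‖ ≤ s. -/

import Mathlib

/-!
Two facts about `f` drive the proof. First, `f(0) = 0`, and convexity of `C` together with
`θ* ∈ C` gives the scaling bound `f(t) ≤ (t/s) f(s)` for `0 < s ≤ t` (shrink a competitor for
`f(t)` towards `θ*` by the factor `s/t`). Hence, if `f(s) ≤ s²/2`, then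
`f(t) - t²/2 ≤ t(s - t)/2 < 0` for every `t > s`, so no maximiser of `f(t) - t²/2` lies beyond `s`.
Second, the variational inequality of `p = Proj_C(v)` gives `‖p - θ*‖² ≤ ⟨v - θ*, p - θ*⟩`,
so `f(r) - r²/2 ≥ r²/2 ≥ 0` at `r = ‖p - θ*‖`, which forces `r ≤ s` as well.
-/

open Real Set

/-- The supremum functional `f(t) = sup_{θ ∈ C, ‖θ-θ*‖ ≤ t} ⟨v - θ*, θ - θ*⟩`. -/
noncomputable def fsup {d : ℕ} (C : Set (EuclideanSpace ℝ (Fin d)))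
    (θs v : EuclideanSpace ℝ (Fin d)) (t : ℝ) : ℝ :=
  sSup {x : ℝ | ∃ θ ∈ C, ‖θ - θs‖ ≤ t ∧ x = (inner ℝ (v - θs) (θ - θs) : ℝ)}

theorem sq_norm_sub_le_inner_of_forall_norm_le {F : Type*} [NormedAddCommGroup F]
    [InnerProductSpace ℝ F] {K : Set F} (hK : Convex ℝ K) {v p θ : F} (hp : p ∈ K)
    (hmin : ∀ w ∈ K, ‖v - p‖ ≤ ‖v - w‖) (hθ : θ ∈ K) :
    ‖p - θ‖ ^ 2 ≤ inner ℝ (v - θ) (p - θ) := by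
  have hinf : ‖v - p‖ = ⨅ w : K, ‖v - w‖ :=
    (IsMinOn.iInf_eq (f := fun w => ‖v - w‖) hp (isMinOn_iff.mpr hmin)).symm
  have hvar : inner ℝ (v - p) (θ - p) ≤ (0 : ℝ) :=
    (norm_eq_iInf_iff_real_inner_le_zero hK hp).mp hinf θ hθ
  have hsplit : inner ℝ (v - θ) (p - θ) = -inner ℝ (v - p) (θ - p) + ‖p - θ‖ ^ 2 := by
    rw [← real_inner_self_eq_norm_sq, show v - θ = (v - p) + (p - θ) by abel, inner_add_left,
      ← neg_sub θ p, inner_neg_right, neg_sub]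
  linarith

section fsup

variable {d : ℕ} {C : Set (EuclideanSpace ℝ (Fin d))} {θs v : EuclideanSpace ℝ (Fin d)}

theorem le_fsup {θ : EuclideanSpace ℝ (Fin d)} (hθ : θ ∈ C) {t : ℝ} (ht : ‖θ - θs‖ ≤ t) :
    inner ℝ (v - θs) (θ - θs) ≤ fsup C θs v t := by
  refine le_csSup ⟨‖v - θs‖ * t, ?_⟩ ⟨θ, hθ, ht, rfl⟩
  rintro x ⟨θ', -, ht', rfl⟩
  exact (real_inner_le_norm _ _).trans (by gcongr)

theorem fsup_le (hθs : θs ∈ C) {t b : ℝ} (ht : 0 ≤ t)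
    (hb : ∀ θ ∈ C, ‖θ - θs‖ ≤ t → inner ℝ (v - θs) (θ - θs) ≤ b) :
    fsup C θs v t ≤ b := by
  refine csSup_le ⟨0, θs, hθs, by simpa using ht, by simp⟩ ?_
  rintro x ⟨θ, hθ, hθt, rfl⟩
  exact hb θ hθ hθt

theorem fsup_zero (hθs : θs ∈ C) : fsup C θs v 0 = 0 := by
  refine le_antisymm (fsup_le hθs le_rfl fun θ _ hθ => ?_) ?_
  · simp [sub_eq_zero.mp (norm_le_zero_iff.mp hθ)]
  · simpa using le_fsup (θs := θs) (v := v) hθs (t := 0) (by simp)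

theorem fsup_le_div_mul_fsup (hC : Convex ℝ C) (hθs : θs ∈ C) {s t : ℝ} (hs : 0 < s)
    (hst : s ≤ t) : fsup C θs v t ≤ t / s * fsup C θs v s := by
  have ht : 0 < t := hs.trans_le hst
  refine fsup_le hθs ht.le fun θ hθ hθt => ?_
  have hratio : s / t ≤ 1 := (div_le_one ht).mpr hst
  have hshrink : (s / t) • θ + (1 - s / t) • θs - θs = (s / t) • (θ - θs) := by module
  have hmem : (s / t) • θ + (1 - s / t) • θs ∈ C :=
    hC hθ hθs (by positivity) (by linarith) (by ring)
  have hnorm : ‖(s / t) • (θ - θs)‖ ≤ s := by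
    rw [norm_smul, Real.norm_of_nonneg (by positivity)]
    calc s / t * ‖θ - θs‖ ≤ s / t * t := by gcongr
      _ = s := div_mul_cancel₀ s ht.ne'
  have hle := le_fsup (v := v) hmem (hshrink ▸ hnorm)
  rw [hshrink, real_inner_smul_right] at hle
  calc inner ℝ (v - θs) (θ - θs) = t / s * (s / t * inner ℝ (v - θs) (θ - θs)) := by
        field_simp
    _ ≤ t / s * fsup C θs v s := by gcongr

theorem fsup_sub_sq_div_two_neg (hC : Convex ℝ C) (hθs : θs ∈ C) {s t : ℝ} (hs : 0 < s)
    (hfs : fsup C θs v s - s ^ 2 / 2 ≤ 0) (hst : s < t) :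
    fsup C θs v t - t ^ 2 / 2 < 0 := by
  have ht : 0 < t := hs.trans hst
  have hbound : fsup C θs v t ≤ t * s / 2 :=
    calc fsup C θs v t ≤ t / s * fsup C θs v s := fsup_le_div_mul_fsup hC hθs hs hst.le
      _ ≤ t / s * (s ^ 2 / 2) := by gcongr; linarith
      _ = t * s / 2 := by field_simp
  nlinarith

end fsup

theorem stmt_1_general {d : ℕ} (C : Set (EuclideanSpace ℝ (Fin d)))
    (hconv : Convex ℝ C)
    (θs : EuclideanSpace ℝ (Fin d)) (hθs : θs ∈ C)
    (v proj : EuclideanSpace ℝ (Fin d))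
    (hprojC : proj ∈ C) (hproj : ∀ w ∈ C, dist v proj ≤ dist v w)
    (tstar : ℝ)
    (htstar : ∀ t : ℝ, 0 ≤ t →
      fsup C θs v t - t ^ 2 / 2 ≤ fsup C θs v tstar - tstar ^ 2 / 2)
    (s : ℝ) (hs : 0 < s) (hfs : fsup C θs v s - s ^ 2 / 2 ≤ 0) :
    tstar ≤ s ∧ ‖proj - θs‖ ≤ s := by
  constructor
  · by_contra! hlt
    have := htstar 0 le_rfl
    rw [fsup_zero hθs] at this
    linarith [fsup_sub_sq_div_two_neg hconv hθs hs hfs hlt]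
  · by_contra! hlt
    have hproj_sq : ‖proj - θs‖ ^ 2 ≤ inner ℝ (v - θs) (proj - θs) :=
      sq_norm_sub_le_inner_of_forall_norm_le hconv hprojC
        (fun w hw => by simpa only [dist_eq_norm] using hproj w hw) hθs
    have := le_fsup (θs := θs) (v := v) hprojC le_rfl
    linarith [fsup_sub_sq_div_two_neg hconv hθs hs hfs hlt, sq_nonneg ‖proj - θs‖]

theorem stmt_1 {d : ℕ} (C : Set (EuclideanSpace ℝ (Fin d)))
    (hconv : Convex ℝ C) (hclosed : IsClosed C) (hne : C.Nonempty)
    (θs : EuclideanSpace ℝ (Fin d)) (hθs : θs ∈ C)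
    (v proj : EuclideanSpace ℝ (Fin d))
    (hprojC : proj ∈ C) (hproj : ∀ w ∈ C, dist v proj ≤ dist v w)
    (tstar : ℝ) (htstar0 : 0 ≤ tstar)
    (htstar : ∀ t : ℝ, 0 ≤ t →
      fsup C θs v t - t ^ 2 / 2 ≤ fsup C θs v tstar - tstar ^ 2 / 2)
    (s : ℝ) (hs : 0 < s) (hfs : fsup C θs v s - s ^ 2 / 2 ≤ 0) :
    tstar ≤ s ∧ ‖proj - θs‖ ≤ s :=
  stmt_1_general C hconv θs hθs v proj hprojC hproj tstar htstar s hs hfs
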